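/- Let W be a holomorphic vector field germ at the origin of ℂ² and F a formal power series with F(0,0) = 0. Then the formal map Φ_W^F : (x,y) ↦ Φ_W^{F(x,y)}(x,y) (the flow of W for time F(x,y)) is a formal change of coordinates (i.e., its Jacobian at the origin is invertible) if and only if (W·F)(0,0) ≠ −1; it fixes the origin, and if W is singular at the origin it is tangent to the identity. -/

import Mathlib

/- Statement 15 (Proposition chg_coord (1)): for a holomorphic vector field germ W and a
formal power series F with F(0,0) = 0, the formal map Φ_W^F : (x,y) ↦ Φ_W^{F(x,y)}(x,y)
(the flow of W for time F) fixes the origin, is a formal change of coordinates iff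
(W·F)(0,0) ≠ −1, and is tangent to the identity whenever W is singular at the origin.
Formalization: formal power series in ℂ[[x,y]]; the flow substituted at time F is
Σ_{n≥0} Fⁿ/n! · W·ⁿ(Id), computed degreewise (the sum is finite in each degree since
F(0,0) = 0); "formal change of coordinates" = invertible Jacobian at the origin. -/

noncomputable section
open MvPowerSeries

abbrev R2 := MvPowerSeries (Fin 2) ℂ

def pd (i : Fin 2) (f : R2) : R2 :=
  fun d => ((d i : ℂ) + 1) * MvPowerSeries.coeff (d + Finsupp.single i 1) f

def lieD (W : Fin 2 → R2) (f : R2) : R2 := W 0 * pd 0 f + W 1 * pd 1 f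

/-- n-th iterated Lie derivative W·ⁿ -/
def iterLie (W : Fin 2 → R2) (n : ℕ) (f : R2) : R2 := (lieD W)^[n] f

/-- the i-th component of the formal flow Φ_W^F = Σₙ Fⁿ/n! · W·ⁿ(Id), computed
degreewise (only the terms with n ≤ |d| contribute to the coefficient of degree d,
since F has zero constant term). -/
def flowComp (W : Fin 2 → R2) (F : R2) (i : Fin 2) : R2 :=
  fun d => MvPowerSeries.coeff d
    (∑ n ∈ Finset.range ((d.sum fun _ e => e) + 1),
      ((n.factorial : ℂ))⁻¹ • (F ^ n * iterLie W n (MvPowerSeries.X i)))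

/- Only the terms n = 0, 1 of the flow reach degree ≤ 1: the term n = 0 is the identity and
the term n = 1 is F · W, so, as F(0,0) = 0, the linear part of Φ_W^F is Id + W(0) ⊗ dF(0).
By the matrix determinant lemma its determinant is 1 + dF(0) · W(0) = 1 + (W·F)(0,0). -/

def jacobianAtZero {ι σ R : Type*} [Semiring R] (Φ : ι → MvPowerSeries σ R) :
    Matrix ι σ R :=
  Matrix.of fun i j => coeff (Finsupp.single j 1) (Φ i)

theorem MvPowerSeries.coeff_single_one_mul {σ R : Type*} [CommSemiring R] (s : σ)
    (f g : MvPowerSeries σ R) :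
    coeff (Finsupp.single s 1) (f * g) =
      coeff (Finsupp.single s 1) f * constantCoeff g +
        constantCoeff f * coeff (Finsupp.single s 1) g := by
  classical
  rw [coeff_mul, Finsupp.antidiagonal_single,
    show Finset.HasAntidiagonal.antidiagonal 1 = ({(0, 1), (1, 0)} : Finset (ℕ × ℕ)) from rfl]
  simp [Finsupp.single_zero, coeff_zero_eq_constantCoeff, add_comm]

lemma constantCoeff_pd (k : Fin 2) (f : R2) :
    constantCoeff (pd k f) = coeff (Finsupp.single k 1) f := by
  change ((((0 : Fin 2 →₀ ℕ) k : ℂ)) + 1) * coeff (0 + Finsupp.single k 1) f = _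
  simp

lemma constantCoeff_lieD (W : Fin 2 → R2) (f : R2) :
    constantCoeff (lieD W f) = ∑ k, constantCoeff (W k) * coeff (Finsupp.single k 1) f := by
  simp [lieD, constantCoeff_pd]

lemma constantCoeff_lieD_X (W : Fin 2 → R2) (i : Fin 2) :
    constantCoeff (lieD W (X i)) = constantCoeff (W i) := by
  simp [constantCoeff_lieD, coeff_index_single_X]

lemma coeff_flowComp (W : Fin 2 → R2) (F : R2) (i : Fin 2) (d : Fin 2 →₀ ℕ) :
    coeff d (flowComp W F i) =
      coeff d (∑ n ∈ Finset.range ((d.sum fun _ e => e) + 1),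
        ((n.factorial : ℂ))⁻¹ • (F ^ n * iterLie W n (X i))) :=
  rfl

lemma constantCoeff_flowComp (W : Fin 2 → R2) (F : R2) (i : Fin 2) :
    constantCoeff (flowComp W F i) = 0 := by
  rw [← coeff_zero_eq_constantCoeff_apply, coeff_flowComp]
  simp [iterLie]

lemma coeff_single_one_flowComp (W : Fin 2 → R2) (F : R2)
    (hF0 : constantCoeff F = 0) (i j : Fin 2) :
    coeff (Finsupp.single j 1) (flowComp W F i) =
      (if i = j then 1 else 0) + constantCoeff (W i) * coeff (Finsupp.single j 1) F := by
  rw [coeff_flowComp, Finsupp.sum_single_index rfl, Finset.sum_range_succ,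
    Finset.sum_range_one]
  simp [iterLie, coeff_single_one_mul, hF0, constantCoeff_lieD_X, coeff_index_single_X,
    eq_comm, mul_comm]

lemma jacobianAtZero_flowComp (W : Fin 2 → R2) (F : R2) (hF0 : constantCoeff F = 0) :
    jacobianAtZero (flowComp W F) =
      1 + Matrix.vecMulVec (fun i => constantCoeff (W i))
        (fun j => coeff (Finsupp.single j 1) F) := by
  ext i j
  simp [jacobianAtZero, coeff_single_one_flowComp W F hF0, Matrix.one_apply,
    Matrix.vecMulVec_apply]

lemma det_jacobianAtZero_flowComp (W : Fin 2 → R2) (F : R2) (hF0 : constantCoeff F = 0) :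
    (jacobianAtZero (flowComp W F)).det = 1 + constantCoeff (lieD W F) := by
  rw [jacobianAtZero_flowComp W F hF0, Matrix.vecMulVec_eq Unit,
    Matrix.det_one_add_replicateCol_mul_replicateRow,
    constantCoeff_lieD, dotProduct]
  simp only [mul_comm]

theorem stmt15 (W : Fin 2 → R2) (F : R2)
    (hF0 : MvPowerSeries.constantCoeff F = 0) :
    -- Φ_W^F fixes the origin :
    (∀ i, MvPowerSeries.constantCoeff (flowComp W F i) = 0) ∧
    -- it is a formal change of coordinates iff (W·F)(0,0) ≠ −1 :
    ((Matrix.of fun i j : Fin 2 =>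
        MvPowerSeries.coeff (Finsupp.single j 1) (flowComp W F i)).det ≠ 0 ↔
      MvPowerSeries.constantCoeff (lieD W F) ≠ -1) ∧
    -- if W is singular it is tangent to the identity :
    ((∀ i, MvPowerSeries.constantCoeff (W i) = 0) →
      ∀ i j : Fin 2, MvPowerSeries.coeff (Finsupp.single j 1) (flowComp W F i)
        = if i = j then 1 else 0) := by
  refine ⟨constantCoeff_flowComp W F, ?_, fun hW i j => ?_⟩
  · change (jacobianAtZero (flowComp W F)).det ≠ 0 ↔ _
    rw [det_jacobianAtZero_flowComp W F hF0, add_comm, Ne, Ne, ← eq_neg_iff_add_eq_zero]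
  · rw [coeff_single_one_flowComp W F hF0, hW i, zero_mul, add_zero]
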